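/- arXiv:1502.06192 — 6 statements merged into one kernel-verified Lean document; each statement's English description precedes it below -/
import Mathlib

section
/- The gradient of the Moreau envelope is Lipschitz continuous with constant c: ‖D φ_c(z) − D φ_c(w)‖ ≤ c‖z − w‖ for all z, w in H. -/
open RealInnerProductSpace

lemma prox_variational {H : Type*} [NormedAddCommGroup H] [InnerProductSpace ℝ H]
    (φ : H → ℝ) (hconv : ConvexOn ℝ Set.univ φ)
    (c : ℝ) (hc : 0 < c) (prox : H → H)
    (hprox : ∀ w u : H, φ (prox w) + c / 2 * ‖prox w - w‖ ^ 2 ≤ φ u + c / 2 * ‖u - w‖ ^ 2)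
    (z w : H) (t : ℝ) (ht0 : 0 < t) (ht1 : t ≤ 1) :
    0 ≤ (φ (prox w) - φ (prox z)) + c * ⟪prox z - z, prox w - prox z⟫ + c / 2 * t * ‖prox w - prox z‖ ^ 2 := by
  set pz := prox z
  set pw := prox w
  set d := pw - pz with hd
  have hu : (1 - t) • pz + t • pw = pz + t • d := by
    rw [hd]; module
  have hconv' : φ ((1 - t) • pz + t • pw) ≤ (1 - t) * φ pz + t * φ pw :=
    hconv.2 (Set.mem_univ pz) (Set.mem_univ pw) (by linarith) (le_of_lt ht0) (by ring)
  have h1 := hprox z (pz + t • d)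
  have hnorm : ‖pz + t • d - z‖ ^ 2 = ‖pz - z‖ ^ 2 + 2 * (t * ⟪pz - z, d⟫) + t ^ 2 * ‖d‖ ^ 2 := by
    have : pz + t • d - z = (pz - z) + t • d := by abel
    rw [this, @norm_add_sq_real, real_inner_smul_right, norm_smul]
    rw [mul_pow, Real.norm_eq_abs, sq_abs]
  rw [hu] at hconv'
  have h2 : φ pz + c / 2 * ‖pz - z‖ ^ 2 ≤ ((1 - t) * φ pz + t * φ pw) + c / 2 * ‖pz + t • d - z‖ ^ 2 :=
    le_trans h1 (by linarith)
  rw [hnorm] at h2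
  have h3 : 0 ≤ t * ((φ pw - φ pz) + c * ⟪pz - z, d⟫ + c / 2 * t * ‖d‖ ^ 2) := by nlinarith
  have h4 := (mul_nonneg_iff_of_pos_left ht0).mp h3
  linarith

theorem moreau_gradient_lipschitz (H : Type*) [NormedAddCommGroup H] [InnerProductSpace ℝ H]
    [CompleteSpace H]
    (φ : H → ℝ) (hconv : ConvexOn ℝ Set.univ φ) (hlsc : LowerSemicontinuous φ)
    (c : ℝ) (hc : 0 < c) (prox : H → H)
    (hprox : ∀ w u : H, φ (prox w) + c / 2 * ‖prox w - w‖ ^ 2 ≤ φ u + c / 2 * ‖u - w‖ ^ 2) :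
    ∀ z w : H, ‖c • (z - prox z) - c • (w - prox w)‖ ≤ c * ‖z - w‖ := by
  intro z w
  set pz := prox z
  set pw := prox w
  -- firm nonexpansiveness: ‖pz - pw‖² ≤ ⟪z - w, pz - pw⟫
  have hK : (0:ℝ) ≤ ‖pz - pw‖ ^ 2 := sq_nonneg _
  have hsum : ∀ t : ℝ, 0 < t → t ≤ 1 →
      0 ≤ (⟪z - w, pz - pw⟫ - ‖pz - pw‖ ^ 2) + t * ‖pz - pw‖ ^ 2 := by
    intro t ht0 ht1
    have h1 := prox_variational φ hconv c hc prox hprox z w t ht0 ht1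
    have h2 := prox_variational φ hconv c hc prox hprox w z t ht0 ht1
    have hident : ⟪pz - z, pw - pz⟫ + ⟪pw - w, pz - pw⟫
        = ⟪z - w, pz - pw⟫ - ‖pz - pw‖ ^ 2 := by
      rw [← @real_inner_self_eq_norm_sq]
      simp only [inner_sub_left, inner_sub_right]
      linarith [real_inner_comm pz pw, real_inner_comm z pw, real_inner_comm z pz,
        real_inner_comm w pz, real_inner_comm w pw]
    have hnn : ‖pw - pz‖ = ‖pz - pw‖ := norm_sub_rev _ _
    rw [hnn] at h1
    nlinarith [mul_pos hc ht0]
  have hfirm : ‖pz - pw‖ ^ 2 ≤ ⟪z - w, pz - pw⟫ := by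
    by_contra hS
    push_neg at hS
    set S : ℝ := ⟪z - w, pz - pw⟫ - ‖pz - pw‖ ^ 2 with hSdef
    have hSneg : S < 0 := by simp only [hSdef]; linarith
    set K : ℝ := ‖pz - pw‖ ^ 2
    rcases eq_or_lt_of_le hK with hK0 | hKpos
    · have := hsum 1 one_pos le_rfl
      rw [← hK0] at this
      linarith
    · have ht0 : 0 < min 1 (-S / (2 * K)) :=
        lt_min one_pos (div_pos (by linarith) (by linarith))
      have ht1 : min 1 (-S / (2 * K)) ≤ 1 := min_le_left _ _
      have h := hsum _ ht0 ht1
      have hle : min 1 (-S / (2 * K)) * K ≤ (-S / (2 * K)) * K :=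
        mul_le_mul_of_nonneg_right (min_le_right _ _) (le_of_lt hKpos)
      have : (-S / (2 * K)) * K = -S / 2 := by field_simp
      nlinarith
  -- conclude
  have hrw : c • (z - pz) - c • (w - pw) = c • ((z - w) - (pz - pw)) := by module
  rw [hrw, norm_smul, Real.norm_eq_abs, abs_of_pos hc]
  have hsq : ‖(z - w) - (pz - pw)‖ ^ 2 ≤ ‖z - w‖ ^ 2 := by
    rw [@norm_sub_sq_real]
    nlinarith
  have : ‖(z - w) - (pz - pw)‖ ≤ ‖z - w‖ := by
    nlinarith [norm_nonneg ((z - w) - (pz - pw)), norm_nonneg (z - w)]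
  exact mul_le_mul_of_nonneg_left this (le_of_lt hc)
end

section
/- For any c > 0, if φ(z) = φ_c(z + λ/c) − (1/(2c))‖λ‖², then λ ∈ ∂φ(z). -/
/-- The Moreau envelope of `φ` with parameter `c`. -/
noncomputable def moreauEnv {H : Type*} [NormedAddCommGroup H] [InnerProductSpace ℝ H]
    (φ : H → ℝ) (c : ℝ) (z : H) : ℝ :=
  ⨅ u : H, (φ u + c / 2 * ‖u - z‖ ^ 2)

/-!
The hypothesis says that `z` attains the infimum defining the Moreau envelope at
`w = z + c⁻¹ • lam`, i.e. `z` minimizes `u ↦ φ u + c/2 ‖u - w‖²`; comparing with the points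
`z + t • (y - z)` via convexity and letting `t → 0⁺` gives the first-order condition
`c • (w - z) = lam ∈ ∂φ(z)`. The infimum is a genuine one (not the junk value of an
unbounded-below `⨅`) because lower semicontinuity at `z` plus convexity give `φ` a minorant
of the form `a - b ‖u - z‖`, which the quadratic term dominates.
-/

open Set Filter Topology

lemma le_of_forall_mem_Ioc_le_add_mul {a b k : ℝ} (h : ∀ t ∈ Ioc (0 : ℝ) 1, a ≤ b + t * k) :
    a ≤ b := by
  have hlim : Tendsto (fun t : ℝ => b + t * k) (𝓝[>] 0) (𝓝 b) := by
    have : Continuous fun t : ℝ => b + t * k := by fun_prop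
    simpa using (this.tendsto 0).mono_left nhdsWithin_le_nhds
  exact ge_of_tendsto hlim (eventually_of_mem (Ioc_mem_nhdsGT one_pos) h)

lemma ConvexOn.map_add_smul_sub_le {E : Type*} [AddCommGroup E] [Module ℝ E] {φ : E → ℝ}
    (hφ : ConvexOn ℝ univ φ) (z u : E) {t : ℝ} (ht₀ : 0 ≤ t) (ht₁ : t ≤ 1) :
    φ (z + t • (u - z)) ≤ φ z + t * (φ u - φ z) := by
  calc φ (z + t • (u - z)) = φ ((1 - t) • z + t • u) := by congr 1; module
    _ ≤ (1 - t) • φ z + t • φ u := hφ.2 (mem_univ z) (mem_univ u) (sub_nonneg.2 ht₁) ht₀ (by ring)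
    _ = φ z + t * (φ u - φ z) := by simp only [smul_eq_mul]; ring

section Normed

variable {E : Type*} [SeminormedAddCommGroup E] [NormedSpace ℝ E] {φ : E → ℝ} {z : E}

lemma ConvexOn.sub_norm_div_le_of_forall_ball (hφ : ConvexOn ℝ univ φ) {δ : ℝ} (hδ : 0 < δ)
    (hball : ∀ x ∈ Metric.ball z δ, φ z - 1 < φ x) (u : E) :
    φ z - 1 - ‖u - z‖ / δ ≤ φ u := by
  -- With `t = δ / (s + δ)` the point `z + t • (u - z)` lies in the ball, and convexity along
  -- the segment then gives `φ u ≥ φ z - 1 / t = φ z - 1 - s / δ`.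
  set s := ‖u - z‖
  have hs : 0 ≤ s := norm_nonneg _
  set t := δ / (s + δ)
  have ht₀ : 0 < t := by positivity
  have ht₁ : t ≤ 1 := div_le_one_of_le₀ (by linarith) (by positivity)
  have hts : t * (s + δ) = δ := div_mul_cancel₀ δ (by positivity)
  have hmem : z + t • (u - z) ∈ Metric.ball z δ := by
    rw [Metric.mem_ball, dist_eq_norm, add_sub_cancel_left, norm_smul,
      Real.norm_of_nonneg ht₀.le]
    nlinarith
  have hlt := (hball _ hmem).trans_le (hφ.map_add_smul_sub_le z u ht₀.le ht₁)
  have hscaled : -(s + δ) ≤ δ * (φ u - φ z) := by rw [← hts]; nlinarith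
  have : φ z - φ u ≤ (s + δ) / δ := by rw [le_div_iff₀ hδ]; linarith
  rw [add_div, div_self hδ.ne'] at this
  linarith

lemma ConvexOn.exists_norm_minorant (hφ : ConvexOn ℝ univ φ) (hlsc : LowerSemicontinuousAt φ z) :
    ∃ a b : ℝ, 0 ≤ b ∧ ∀ u, a - b * ‖u - z‖ ≤ φ u := by
  obtain ⟨δ, hδ, hball⟩ := Metric.eventually_nhds_iff_ball.1 (hlsc (φ z - 1) (by linarith))
  refine ⟨φ z - 1, δ⁻¹, by positivity, fun u => ?_⟩
  simpa [inv_mul_eq_div] using hφ.sub_norm_div_le_of_forall_ball hδ hball u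

end Normed

lemma bddBelow_range_add_sq_norm {E : Type*} [SeminormedAddCommGroup E] {φ : E → ℝ} {z : E}
    {a b c : ℝ} (hb : 0 ≤ b) (hc : 0 < c) (hφ : ∀ u, a - b * ‖u - z‖ ≤ φ u) (w : E) :
    BddBelow (range fun u => φ u + c / 2 * ‖u - w‖ ^ 2) := by
  refine ⟨a - b * ‖w - z‖ - b ^ 2 / (2 * c), ?_⟩
  rintro _ ⟨u, rfl⟩
  have htri : b * ‖u - z‖ ≤ b * (‖u - w‖ + ‖w - z‖) :=
    mul_le_mul_of_nonneg_left (norm_sub_le_norm_sub_add_norm_sub u w z) hb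
  have hamgm : b * ‖u - w‖ ≤ c / 2 * ‖u - w‖ ^ 2 + b ^ 2 / (2 * c) := by
    have hsq : c / 2 * ‖u - w‖ ^ 2 + b ^ 2 / (2 * c) - b * ‖u - w‖
        = (c * ‖u - w‖ - b) ^ 2 / (2 * c) := by
      field_simp; ring
    have : 0 ≤ (c * ‖u - w‖ - b) ^ 2 / (2 * c) := by positivity
    linarith
  dsimp only
  linarith [hφ u]

lemma isMinOn_of_moreauEnv_eq {H : Type*} [NormedAddCommGroup H] [InnerProductSpace ℝ H]
    {φ : H → ℝ} {c : ℝ} {z w : H} (hbdd : BddBelow (range fun u => φ u + c / 2 * ‖u - w‖ ^ 2))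
    (h : φ z + c / 2 * ‖z - w‖ ^ 2 = moreauEnv φ c w) :
    IsMinOn (fun u => φ u + c / 2 * ‖u - w‖ ^ 2) univ z :=
  fun u _ => h.trans_le (ciInf_le hbdd u)

lemma ConvexOn.le_of_isMinOn_add_sq_norm {H : Type*} [SeminormedAddCommGroup H]
    [InnerProductSpace ℝ H] {φ : H → ℝ} (hφ : ConvexOn ℝ univ φ) {c : ℝ} {z w : H}
    (hmin : IsMinOn (fun u => φ u + c / 2 * ‖u - w‖ ^ 2) univ z) (y : H) :
    φ z + inner ℝ (c • (w - z)) (y - z) ≤ φ y := by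
  refine le_of_forall_mem_Ioc_le_add_mul (k := c / 2 * ‖y - z‖ ^ 2) fun t ⟨ht₀, ht₁⟩ => ?_
  have hconv := hφ.map_add_smul_sub_le z y ht₀.le ht₁
  have hle : φ z + c / 2 * ‖z - w‖ ^ 2
      ≤ φ (z + t • (y - z)) + c / 2 * ‖z + t • (y - z) - w‖ ^ 2 :=
    hmin (mem_univ _)
  have hexp : ‖z + t • (y - z) - w‖ ^ 2
      = ‖z - w‖ ^ 2 - 2 * t * inner ℝ (w - z) (y - z) + t ^ 2 * ‖y - z‖ ^ 2 := by
    rw [add_sub_right_comm, norm_add_sq_real, inner_smul_right, norm_smul, mul_pow,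
      Real.norm_eq_abs, sq_abs, ← neg_sub w z, inner_neg_left]
    ring
  rw [real_inner_smul_left]
  have : t * (φ z + c * inner ℝ (w - z) (y - z)) ≤ t * (φ y + t * (c / 2 * ‖y - z‖ ^ 2)) := by
    rw [hexp] at hle
    nlinarith
  exact le_of_mul_le_mul_left this ht₀

theorem env_eq_implies_subgrad_general (H : Type*) [NormedAddCommGroup H] [InnerProductSpace ℝ H]
    (φ : H → ℝ) (hconv : ConvexOn ℝ Set.univ φ) (hlsc : LowerSemicontinuous φ)
    (c : ℝ) (hc : 0 < c) (z lam : H)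
    (h : φ z = moreauEnv φ c (z + c⁻¹ • lam) - 1 / (2 * c) * ‖lam‖ ^ 2) :
    ∀ y : H, φ z + (inner ℝ lam (y - z) : ℝ) ≤ φ y := by
  intro y
  set w := z + c⁻¹ • lam
  obtain ⟨a, b, hb, hminor⟩ := hconv.exists_norm_minorant (hlsc z)
  have hattained : φ z + c / 2 * ‖z - w‖ ^ 2 = moreauEnv φ c w := by
    rw [h, sub_add_cancel_left, norm_neg, norm_smul, mul_pow,
      Real.norm_of_nonneg (inv_nonneg.2 hc.le)]
    field_simp
    ring
  have hlam : c • (w - z) = lam := by simp [w, hc.ne']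
  have hmin := isMinOn_of_moreauEnv_eq (bddBelow_range_add_sq_norm hb hc hminor w) hattained
  simpa only [hlam] using hconv.le_of_isMinOn_add_sq_norm hmin y

theorem env_eq_implies_subgrad (H : Type*) [NormedAddCommGroup H] [InnerProductSpace ℝ H]
    [CompleteSpace H]
    (φ : H → ℝ) (hconv : ConvexOn ℝ Set.univ φ) (hlsc : LowerSemicontinuous φ)
    (c : ℝ) (hc : 0 < c) (z lam : H)
    (h : φ z = moreauEnv φ c (z + c⁻¹ • lam) - 1 / (2 * c) * ‖lam‖ ^ 2) :
    ∀ y : H, φ z + (inner ℝ lam (y - z) : ℝ) ≤ φ y :=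
  env_eq_implies_subgrad_general H φ hconv hlsc c hc z lam h
end

section
/- If (x̄, λ̄) satisfies D_x f(x̄) + E^T λ̄ = 0 and λ̄ ∈ ∂φ(E x̄), then (x̄, λ̄) is a saddle point of the augmented Lagrangian: L_c(x̄, λ) ≤ L_c(x̄, λ̄) ≤ L_c(x, λ̄) for all x ∈ X and λ ∈ H. -/
/-- The augmented Lagrangian `L_c(x, λ) = f(x) + φ_c(Ex + λ/c) − (1/(2c))‖λ‖²`. -/
noncomputable def augLag {X H : Type*} [NormedAddCommGroup X] [NormedSpace ℝ X]
    [NormedAddCommGroup H] [InnerProductSpace ℝ H]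
    (f : X → ℝ) (φ : H → ℝ) (E : X →L[ℝ] H) (c : ℝ) (x : X) (lam : H) : ℝ :=
  f x + moreauEnv φ c (E x + c⁻¹ • lam) - 1 / (2 * c) * ‖lam‖ ^ 2

open scoped RealInnerProductSpace

theorem ConvexOn.add_le_of_hasFDerivAt {X : Type*} [NormedAddCommGroup X] [NormedSpace ℝ X]
    {s : Set X} {f : X → ℝ} {f' : X →L[ℝ] ℝ} {x₀ x : X} (hf : ConvexOn ℝ s f)
    (hx₀ : x₀ ∈ s) (hx : x ∈ s) (hf' : HasFDerivAt f f' x₀) :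
    f x₀ + f' (x - x₀) ≤ f x := by
  let ℓ := AffineMap.lineMap (k := ℝ) x₀ x
  have hℓ0 : ℓ 0 = x₀ := AffineMap.lineMap_apply_zero x₀ x
  have hℓ1 : ℓ 1 = x := AffineMap.lineMap_apply_one x₀ x
  have hconv : ConvexOn ℝ (ℓ ⁻¹' s) (f ∘ ℓ) := hf.comp_affineMap ℓ
  have hderiv : HasDerivAt (f ∘ ℓ) (f' (x - x₀)) 0 := by
    rw [← hℓ0] at hf'
    exact hf'.comp_hasDerivAt 0 AffineMap.hasDerivAt_lineMap
  have hslope := hconv.le_slope_of_hasDerivAt (x := 0) (y := 1)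
    (by simpa [hℓ0] using hx₀) (by simpa [hℓ1] using hx) zero_lt_one hderiv
  rw [slope_def_field] at hslope
  simp only [Function.comp_apply, hℓ0, hℓ1, sub_zero, div_one] at hslope
  linarith

section MoreauEnvelope

variable {H : Type*} [NormedAddCommGroup H] [InnerProductSpace ℝ H]

def HasSubgradientAt (φ : H → ℝ) (g w : H) : Prop :=
  ∀ y, φ w + ⟪g, y - w⟫ ≤ φ y

theorem neg_norm_sq_div_le_inner_add_norm_sq {c : ℝ} (hc : 0 < c) (g v : H) :
    -(‖g‖ ^ 2 / (2 * c)) ≤ ⟪g, v⟫ + c / 2 * ‖v‖ ^ 2 := by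
  have hsq : 0 ≤ ‖g + c • v‖ ^ 2 := sq_nonneg _
  rw [norm_add_sq_real, real_inner_smul_right, norm_smul, Real.norm_of_nonneg hc.le] at hsq
  rw [neg_le_iff_add_nonneg, ← mul_le_mul_iff_right₀ (by positivity : 0 < 2 * c)]
  field_simp
  nlinarith

theorem HasSubgradientAt.le_moreau_integrand {φ : H → ℝ} {g w : H} (h : HasSubgradientAt φ g w)
    {c : ℝ} (hc : 0 < c) (z u : H) :
    φ w + ⟪g, z - w⟫ - ‖g‖ ^ 2 / (2 * c) ≤ φ u + c / 2 * ‖u - z‖ ^ 2 := by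
  have hsplit : ⟪g, u - w⟫ = ⟪g, z - w⟫ + ⟪g, u - z⟫ := by
    rw [← inner_add_right, sub_add_sub_cancel']
  have := neg_norm_sq_div_le_inner_add_norm_sq hc g (u - z)
  linarith [h u]

theorem HasSubgradientAt.le_moreauEnv {φ : H → ℝ} {g w : H} (h : HasSubgradientAt φ g w)
    {c : ℝ} (hc : 0 < c) (z : H) :
    φ w + ⟪g, z - w⟫ - ‖g‖ ^ 2 / (2 * c) ≤ moreauEnv φ c z :=
  le_ciInf (h.le_moreau_integrand hc z)

theorem HasSubgradientAt.moreauEnv_le {φ : H → ℝ} {g w : H} (h : HasSubgradientAt φ g w)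
    {c : ℝ} (hc : 0 < c) (z u : H) :
    moreauEnv φ c z ≤ φ u + c / 2 * ‖u - z‖ ^ 2 :=
  ciInf_le ⟨_, Set.forall_mem_range.2 (h.le_moreau_integrand hc z)⟩ u

end MoreauEnvelope

section AugmentedLagrangian

variable {X H : Type*} [NormedAddCommGroup X] [NormedSpace ℝ X]
  [NormedAddCommGroup H] [InnerProductSpace ℝ H]
  {f : X → ℝ} {φ : H → ℝ} {E : X →L[ℝ] H} {c : ℝ}

theorem augLag_le_of_hasSubgradientAt {g : H} {x : X} (h : HasSubgradientAt φ g (E x))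
    (hc : 0 < c) (lam : H) :
    augLag f φ E c x lam ≤ f x + φ (E x) := by
  have hle := h.moreauEnv_le hc (E x + c⁻¹ • lam) (E x)
  have hnorm : c / 2 * ‖E x - (E x + c⁻¹ • lam)‖ ^ 2 = 1 / (2 * c) * ‖lam‖ ^ 2 := by
    rw [sub_add_cancel_left, norm_neg, norm_smul, Real.norm_of_nonneg (inv_nonneg.2 hc.le)]
    field_simp
  unfold augLag
  linarith

theorem le_augLag_of_hasSubgradientAt {g w : H} (h : HasSubgradientAt φ g w) (hc : 0 < c)
    (x : X) :
    f x + φ w + ⟪g, E x - w⟫ ≤ augLag f φ E c x g := by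
  have hle := h.le_moreauEnv hc (E x + c⁻¹ • g)
  have hinner : ⟪g, E x + c⁻¹ • g - w⟫ = ⟪g, E x - w⟫ + c⁻¹ * ‖g‖ ^ 2 := by
    rw [add_sub_right_comm, inner_add_right, real_inner_smul_right, real_inner_self_eq_norm_sq]
  have hcoef : c⁻¹ * ‖g‖ ^ 2 - ‖g‖ ^ 2 / (2 * c) = 1 / (2 * c) * ‖g‖ ^ 2 := by
    field_simp
    ring
  unfold augLag
  linarith

end AugmentedLagrangian

theorem optimality_implies_saddle_general (X H : Type*)
    [NormedAddCommGroup X] [NormedSpace ℝ X]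
    [NormedAddCommGroup H] [InnerProductSpace ℝ H]
    (f : X → ℝ) (hf : ConvexOn ℝ Set.univ f)
    (Df : X → X →L[ℝ] ℝ) (hDf : ∀ x, HasFDerivAt f (Df x) x)
    (φ : H → ℝ)
    (E : X →L[ℝ] H) (c : ℝ) (hc : 0 < c)
    (xb : X) (lamb : H)
    (h1 : Df xb + (innerSL ℝ lamb).comp E = 0)
    (h2 : ∀ y : H, φ (E xb) + (inner ℝ lamb (y - E xb) : ℝ) ≤ φ y) :
    ∀ (x : X) (lam : H),
      augLag f φ E c xb lam ≤ augLag f φ E c xb lamb ∧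
      augLag f φ E c xb lamb ≤ augLag f φ E c x lamb := by
  intro x lam
  have hsub : HasSubgradientAt φ lamb (E xb) := h2
  have hupper := augLag_le_of_hasSubgradientAt (f := f) hsub hc
  have hlower := le_augLag_of_hasSubgradientAt (f := f) (E := E) hsub hc
  have hstationary : f xb ≤ f x + ⟪lamb, E x - E xb⟫ := by
    have htangent := hf.add_le_of_hasFDerivAt (Set.mem_univ xb) (Set.mem_univ x) (hDf xb)
    have hDx : Df xb (x - xb) = -⟪lamb, E x - E xb⟫ := by
      have := congrArg (fun L : X →L[ℝ] ℝ => L (x - xb)) h1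
      simp only [add_apply, ContinuousLinearMap.comp_apply, innerSL_apply_apply, zero_apply,
        map_sub, inner_sub_right] at this ⊢
      linarith
    linarith
  constructor
  · have hlower_xb := hlower xb
    rw [sub_self, inner_zero_right, add_zero] at hlower_xb
    exact (hupper lam).trans hlower_xb
  · linarith [hupper lamb, hlower x]

theorem optimality_implies_saddle (X H : Type*)
    [NormedAddCommGroup X] [NormedSpace ℝ X] [CompleteSpace X]
    [NormedAddCommGroup H] [InnerProductSpace ℝ H] [CompleteSpace H]
    (f : X → ℝ) (hf : ConvexOn ℝ Set.univ f)
    (Df : X → X →L[ℝ] ℝ) (hDf : ∀ x, HasFDerivAt f (Df x) x) (hDfc : Continuous Df)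
    (φ : H → ℝ) (hconv : ConvexOn ℝ Set.univ φ) (hlsc : LowerSemicontinuous φ)
    (E : X →L[ℝ] H) (c : ℝ) (hc : 0 < c)
    (xb : X) (lamb : H)
    (h1 : Df xb + (innerSL ℝ lamb).comp E = 0)
    (h2 : ∀ y : H, φ (E xb) + (inner ℝ lamb (y - E xb) : ℝ) ≤ φ y) :
    ∀ (x : X) (lam : H),
      augLag f φ E c xb lam ≤ augLag f φ E c xb lamb ∧
      augLag f φ E c xb lamb ≤ augLag f φ E c x lamb :=
  optimality_implies_saddle_general X H f hf Df hDf φ E c hc xb lamb h1 h2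
end

section
/- For any proper lower semicontinuous convex function φ on ℝ^m and c > 0, every element G of Clarke's generalized Jacobian ∂(prox_{φ/c})(z) is a symmetric positive semidefinite matrix with operator norm ‖G‖ ≤ 1. -/
/-!
Firm nonexpansiveness `‖prox x - prox y‖² ≤ ⟪prox x - prox y, x - y⟫` follows by adding the
optimality conditions `c ⟪x - prox x, u - prox x⟫ ≤ φ u - φ (prox x)` at `x` and `y`. Comparing the
Moreau envelope `e x = φ (prox x) + c/2 ‖prox x - x‖²` at `x` and `y` through the two minimizers
traps `e y - e x - c ⟪x - prox x, y - x⟫` between `± c/2 ‖y - x‖²`, so `e` is differentiable with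
gradient `c (x - prox x)`. Where `prox` is differentiable its Jacobian is therefore
`1 - c⁻¹ ∇²e`, which is symmetric, and it inherits firm nonexpansiveness. Symmetric firmly
nonexpansive operators form a closed convex set, which hence contains the whole Clarke Jacobian;
and `‖G v‖² ≤ ⟪G v, v⟫` gives both `0 ≤ ⟪G v, v⟫` and `‖G‖ ≤ 1`.
-/

/-- The limiting (B-) Jacobian of a map `F` at `z`: limits of Jacobians of `F` at
points of differentiability converging to `z`. -/
def limitingJacobian {m : ℕ}
    (F : EuclideanSpace ℝ (Fin m) → EuclideanSpace ℝ (Fin m)) (z : EuclideanSpace ℝ (Fin m)) :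
    Set (EuclideanSpace ℝ (Fin m) →L[ℝ] EuclideanSpace ℝ (Fin m)) :=
  {G | ∃ (zs : ℕ → EuclideanSpace ℝ (Fin m))
        (As : ℕ → EuclideanSpace ℝ (Fin m) →L[ℝ] EuclideanSpace ℝ (Fin m)),
      Filter.Tendsto zs Filter.atTop (nhds z) ∧
      (∀ k, HasFDerivAt F (As k) (zs k)) ∧
      Filter.Tendsto As Filter.atTop (nhds G)}

/-- Clarke's generalized Jacobian: the convex hull of the limiting Jacobian. -/
noncomputable def clarkeJacobian {m : ℕ}
    (F : EuclideanSpace ℝ (Fin m) → EuclideanSpace ℝ (Fin m)) (z : EuclideanSpace ℝ (Fin m)) :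
    Set (EuclideanSpace ℝ (Fin m) →L[ℝ] EuclideanSpace ℝ (Fin m)) :=
  convexHull ℝ (limitingJacobian F z)

open Filter Topology Set
open scoped RealInnerProductSpace

theorem hasFDerivAt_of_norm_sub_le_mul_sq {𝕜 E F : Type*} [NontriviallyNormedField 𝕜]
    [NormedAddCommGroup E] [NormedSpace 𝕜 E] [NormedAddCommGroup F] [NormedSpace 𝕜 F]
    {f : E → F} {f' : E →L[𝕜] F} {x : E} {C : ℝ}
    (hf : ∀ y, ‖f y - f x - f' (y - x)‖ ≤ C * ‖y - x‖ ^ 2) : HasFDerivAt f f' x := by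
  rw [hasFDerivAt_iff_isLittleO_nhds_zero]
  refine (Asymptotics.IsBigO.of_bound C (Eventually.of_forall fun h => ?_)).trans_isLittleO
    (Asymptotics.isLittleO_norm_pow_id one_lt_two)
  simpa using hf (x + h)

theorem nonneg_of_forall_mul_add_sq_mul_nonneg {a b : ℝ}
    (h : ∀ t : ℝ, 0 < t → t ≤ 1 → 0 ≤ t * a + t ^ 2 * b) : 0 ≤ a := by
  have hlim : Tendsto (fun t : ℝ => a + t * b) (𝓝[>] 0) (𝓝 a) := by
    have : Continuous fun t : ℝ => a + t * b := by fun_prop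
    simpa using (this.tendsto 0).mono_left nhdsWithin_le_nhds
  refine ge_of_tendsto hlim ?_
  filter_upwards [Ioc_mem_nhdsGT one_pos] with t ⟨ht0, ht1⟩
  refine nonneg_of_mul_nonneg_right ?_ ht0
  linarith [h t ht0 ht1]

theorem HasFDerivAt.isSymmetric_of_gradient {E : Type*} [NormedAddCommGroup E]
    [InnerProductSpace ℝ E] {f : E → ℝ} {g : E → E} {A : E →L[ℝ] E} {z : E}
    (hf : ∀ y, HasFDerivAt f (innerSL ℝ (g y)) y) (hg : HasFDerivAt g A z) :
    (A : E →ₗ[ℝ] E).IsSymmetric := by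
  intro v w
  have hsymm := second_derivative_symmetric hf ((innerSL ℝ).hasFDerivAt.comp z hg) v w
  exact hsymm.trans (real_inner_comm _ _)

section FirmlyNonexpansive

variable {E : Type*} [NormedAddCommGroup E] [InnerProductSpace ℝ E]

def IsFirmlyNonexpansive (F : E → E) : Prop :=
  ∀ x y, ‖F x - F y‖ ^ 2 ≤ ⟪F x - F y, x - y⟫

theorem IsFirmlyNonexpansive.norm_sub_le {F : E → E} (hF : IsFirmlyNonexpansive F) (x y : E) :
    ‖F x - F y‖ ≤ ‖x - y‖ := by
  have h := (hF x y).trans (real_inner_le_norm _ _)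
  rw [sq] at h
  by_cases h0 : ‖F x - F y‖ = 0
  · simp [h0]
  · exact le_of_mul_le_mul_left h (lt_of_le_of_ne (norm_nonneg _) (Ne.symm h0))

theorem IsFirmlyNonexpansive.inner_le_norm_sq {F : E → E} (hF : IsFirmlyNonexpansive F)
    (x y : E) : ⟪F x - F y, x - y⟫ ≤ ‖x - y‖ ^ 2 :=
  calc ⟪F x - F y, x - y⟫ ≤ ‖F x - F y‖ * ‖x - y‖ := real_inner_le_norm _ _
    _ ≤ ‖x - y‖ * ‖x - y‖ := by gcongr; exact hF.norm_sub_le x y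
    _ = ‖x - y‖ ^ 2 := (sq _).symm

theorem convex_setOf_isFirmlyNonexpansive : Convex ℝ {F : E → E | IsFirmlyNonexpansive F} := by
  intro F hF G hG a b ha hb hab x y
  have hsub : (a • F + b • G) x - (a • F + b • G) y = a • (F x - F y) + b • (G x - G y) := by
    simp only [Pi.add_apply, Pi.smul_apply, smul_sub]; abel
  rw [hsub, inner_add_left, real_inner_smul_left, real_inner_smul_left]
  calc ‖a • (F x - F y) + b • (G x - G y)‖ ^ 2
      ≤ a * ‖F x - F y‖ ^ 2 + b * ‖G x - G y‖ ^ 2 :=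
        (convexOn_univ_norm.pow (fun _ _ => norm_nonneg _) 2).2 (mem_univ _) (mem_univ _) ha hb hab
    _ ≤ a * ⟪F x - F y, x - y⟫ + b * ⟪G x - G y, x - y⟫ := by
        gcongr
        exacts [hF x y, hG x y]

namespace ContinuousLinearMap

theorem isFirmlyNonexpansive_iff {A : E →L[ℝ] E} :
    IsFirmlyNonexpansive A ↔ ∀ v, ‖A v‖ ^ 2 ≤ ⟪A v, v⟫ := by
  refine ⟨fun hA v => by simpa using hA v 0, fun hA x y => ?_⟩
  rw [← map_sub]
  exact hA (x - y)

theorem convex_setOf_isFirmlyNonexpansive :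
    Convex ℝ {A : E →L[ℝ] E | IsFirmlyNonexpansive A} := by
  intro A hA B hB a b ha hb hab
  simpa using _root_.convex_setOf_isFirmlyNonexpansive hA hB ha hb hab

theorem isClosed_setOf_isFirmlyNonexpansive :
    IsClosed {A : E →L[ℝ] E | IsFirmlyNonexpansive A} := by
  simp only [isFirmlyNonexpansive_iff, ofPred_forall]
  exact isClosed_iInter fun v => isClosed_le (by fun_prop) (by fun_prop)

theorem convex_setOf_isSymmetric : Convex ℝ {A : E →L[ℝ] E | (A : E →ₗ[ℝ] E).IsSymmetric} := by
  intro A hA B hB a b _ _ _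
  simpa using (hA.smul (conj_trivial a)).add (hB.smul (conj_trivial b))

theorem isClosed_setOf_isSymmetric :
    IsClosed {A : E →L[ℝ] E | (A : E →ₗ[ℝ] E).IsSymmetric} := by
  simp only [LinearMap.IsSymmetric, coe_coe, ofPred_forall]
  exact isClosed_iInter fun x => isClosed_iInter fun y => isClosed_eq (by fun_prop) (by fun_prop)

theorem opNorm_le_one_of_isFirmlyNonexpansive {A : E →L[ℝ] E} (hA : IsFirmlyNonexpansive A) :
    ‖A‖ ≤ 1 :=
  opNorm_le_bound A zero_le_one fun v => by simpa using hA.norm_sub_le v 0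

end ContinuousLinearMap

theorem IsFirmlyNonexpansive.hasFDerivAt {F : E → E} {A : E →L[ℝ] E} {z : E}
    (hF : IsFirmlyNonexpansive F) (hA : HasFDerivAt F A z) : IsFirmlyNonexpansive A := by
  refine ContinuousLinearMap.isFirmlyNonexpansive_iff.2 fun v => ?_
  have hq := hA.lim v (c := fun n : ℕ => (n : ℝ)) (by simpa using tendsto_natCast_atTop_atTop)
  refine le_of_tendsto_of_tendsto' (hq.norm.pow 2) (hq.inner tendsto_const_nhds) fun n => ?_
  set d := F (z + (n : ℝ)⁻¹ • v) - F z
  have hd : ‖d‖ ^ 2 ≤ (n : ℝ)⁻¹ * ⟪d, v⟫ := by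
    simpa [real_inner_smul_right] using hF (z + (n : ℝ)⁻¹ • v) z
  rcases eq_or_ne (n : ℝ) 0 with hn | hn
  · simp [hn]
  calc ‖(n : ℝ) • d‖ ^ 2 = (n : ℝ) ^ 2 * ‖d‖ ^ 2 := by
        rw [norm_smul, mul_pow, Real.norm_eq_abs, sq_abs]
    _ ≤ (n : ℝ) ^ 2 * ((n : ℝ)⁻¹ * ⟪d, v⟫) := by gcongr
    _ = ⟪(n : ℝ) • d, v⟫ := by rw [real_inner_smul_left]; field_simp

end FirmlyNonexpansive

section Prox

variable {E : Type*} [NormedAddCommGroup E] [InnerProductSpace ℝ E]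
  {φ : E → ℝ} {c : ℝ} {prox : E → E}

def IsProxMap (φ : E → ℝ) (c : ℝ) (prox : E → E) : Prop :=
  ∀ w u, φ (prox w) + c / 2 * ‖prox w - w‖ ^ 2 ≤ φ u + c / 2 * ‖u - w‖ ^ 2

noncomputable def moreauEnvelope (φ : E → ℝ) (c : ℝ) (prox : E → E) (x : E) : ℝ :=
  φ (prox x) + c / 2 * ‖prox x - x‖ ^ 2

theorem IsProxMap.inner_le (hφ : ConvexOn ℝ univ φ) (hprox : IsProxMap φ c prox) (x u : E) :
    c * ⟪x - prox x, u - prox x⟫ ≤ φ u - φ (prox x) := by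
  set p := prox x
  suffices 0 ≤ (φ u - φ p - c * ⟪x - p, u - p⟫) by linarith
  refine nonneg_of_forall_mul_add_sq_mul_nonneg (b := c / 2 * ‖u - p‖ ^ 2) fun t ht0 ht1 => ?_
  have hconv : φ (p + t • (u - p)) ≤ (1 - t) * φ p + t * φ u := by
    have hseg : p + t • (u - p) = (1 - t) • p + t • u := by
      rw [smul_sub, sub_smul, one_smul]; abel
    rw [hseg]
    exact hφ.2 (mem_univ p) (mem_univ u) (by linarith) ht0.le (by ring)
  have hexp : ‖p + t • (u - p) - x‖ ^ 2
      = ‖p - x‖ ^ 2 - 2 * t * ⟪x - p, u - p⟫ + t ^ 2 * ‖u - p‖ ^ 2 := by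
    rw [show p + t • (u - p) - x = t • (u - p) - (x - p) by abel, norm_sub_sq_real, norm_smul,
      real_inner_smul_left, norm_sub_rev x p, Real.norm_eq_abs, mul_pow, sq_abs]
    rw [real_inner_comm]; ring
  have hmin := hprox x (p + t • (u - p))
  rw [hexp] at hmin
  linarith

theorem IsProxMap.isFirmlyNonexpansive (hφ : ConvexOn ℝ univ φ) (hc : 0 < c)
    (hprox : IsProxMap φ c prox) : IsFirmlyNonexpansive prox := by
  intro x y
  have hx := hprox.inner_le hφ x (prox y)
  have hy := hprox.inner_le hφ y (prox x)
  have hsum : ⟪x - prox x, prox y - prox x⟫ + ⟪y - prox y, prox x - prox y⟫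
      = ‖prox x - prox y‖ ^ 2 - ⟪prox x - prox y, x - y⟫ := by
    rw [← real_inner_self_eq_norm_sq]
    simp only [inner_sub_left, inner_sub_right, real_inner_comm]
    ring
  have hneg : c * (‖prox x - prox y‖ ^ 2 - ⟪prox x - prox y, x - y⟫) ≤ 0 := by
    rw [← hsum, mul_add]
    linarith
  exact sub_nonpos.1 (nonpos_of_mul_nonpos_right hneg hc)

theorem IsProxMap.hasFDerivAt_moreauEnvelope (hφ : ConvexOn ℝ univ φ) (hc : 0 < c)
    (hprox : IsProxMap φ c prox) (x : E) :
    HasFDerivAt (moreauEnvelope φ c prox) (c • innerSL ℝ (x - prox x)) x := by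
  refine hasFDerivAt_of_norm_sub_le_mul_sq (C := c / 2) fun y => ?_
  simp only [FunLike.coe_smul, Pi.smul_apply, innerSL_apply_apply, smul_eq_mul,
    Real.norm_eq_abs, moreauEnvelope]
  have hupper := hprox y (prox x)
  have hlower := hprox x (prox y)
  rw [show prox x - y = (prox x - x) - (y - x) by abel, norm_sub_sq_real (prox x - x)] at hupper
  rw [show prox y - x = (prox y - y) + (y - x) by abel, norm_add_sq_real (prox y - y)] at hlower
  have hsplit : ⟪prox y - y, y - x⟫
      = ⟪prox y - prox x, y - x⟫ - ‖y - x‖ ^ 2 + ⟪prox x - x, y - x⟫ := by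
    rw [← real_inner_self_eq_norm_sq, ← inner_sub_left, ← inner_add_left]
    congr 1; abel
  have hswap : ⟪x - prox x, y - x⟫ = -⟪prox x - x, y - x⟫ := by
    rw [← inner_neg_left, neg_sub]
  have hfirm := mul_nonneg hc.le
    (sub_nonneg.2 ((hprox.isFirmlyNonexpansive hφ hc).inner_le_norm_sq y x))
  rw [hsplit] at hlower
  rw [abs_le, hswap]
  constructor <;> linarith

theorem IsProxMap.isSymmetric_of_hasFDerivAt {A : E →L[ℝ] E} {z : E} (hφ : ConvexOn ℝ univ φ)
    (hc : 0 < c) (hprox : IsProxMap φ c prox) (hA : HasFDerivAt prox A z) :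
    (A : E →ₗ[ℝ] E).IsSymmetric := by
  have hgrad : ∀ y, HasFDerivAt (moreauEnvelope φ c prox) (innerSL ℝ (c • (y - prox y))) y := by
    simpa only [map_smul] using hprox.hasFDerivAt_moreauEnvelope hφ hc
  have hsymm := (((hasFDerivAt_id z).sub hA).const_smul c).isSymmetric_of_gradient hgrad
  intro v w
  have hvw := hsymm v w
  simp only [ContinuousLinearMap.coe_coe, FunLike.coe_smul, Pi.smul_apply,
    FunLike.coe_sub, Pi.sub_apply, ContinuousLinearMap.id_apply, real_inner_smul_left,
    real_inner_smul_right, inner_sub_left, inner_sub_right] at hvw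
  have hcancel := mul_left_cancel₀ hc.ne' hvw
  simp only [ContinuousLinearMap.coe_coe]
  linarith

end Prox

section Jacobian

variable {m : ℕ} {F : EuclideanSpace ℝ (Fin m) → EuclideanSpace ℝ (Fin m)}
  {z : EuclideanSpace ℝ (Fin m)} {S : Set (EuclideanSpace ℝ (Fin m) →L[ℝ] EuclideanSpace ℝ (Fin m))}

theorem limitingJacobian_subset (hS : IsClosed S) (hF : ∀ x A, HasFDerivAt F A x → A ∈ S) :
    limitingJacobian F z ⊆ S := by
  rintro G ⟨zs, As, -, hAs, hlim⟩
  exact hS.mem_of_tendsto hlim (Eventually.of_forall fun k => hF _ _ (hAs k))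

theorem clarkeJacobian_subset (hS : IsClosed S) (hS' : Convex ℝ S)
    (hF : ∀ x A, HasFDerivAt F A x → A ∈ S) : clarkeJacobian F z ⊆ S :=
  convexHull_min (limitingJacobian_subset hS hF) hS'

end Jacobian

theorem clarke_jacobian_prox_general (m : ℕ)
    (φ : EuclideanSpace ℝ (Fin m) → ℝ)
    (hconv : ConvexOn ℝ Set.univ φ)
    (c : ℝ) (hc : 0 < c)
    (prox : EuclideanSpace ℝ (Fin m) → EuclideanSpace ℝ (Fin m))
    -- `prox w = prox_{φ/c}(w)` : the unique minimizer of `u ↦ φ(u) + (c/2)‖u − w‖²`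
    (hprox : ∀ w u, φ (prox w) + c / 2 * ‖prox w - w‖ ^ 2 ≤ φ u + c / 2 * ‖u - w‖ ^ 2) :
    ∀ (z : EuclideanSpace ℝ (Fin m)) (G : EuclideanSpace ℝ (Fin m) →L[ℝ] EuclideanSpace ℝ (Fin m)),
      G ∈ clarkeJacobian prox z →
        (∀ v w, (inner ℝ (G v) w : ℝ) = (inner ℝ v (G w) : ℝ)) ∧
        (∀ v, 0 ≤ (inner ℝ (G v) v : ℝ)) ∧
        ‖G‖ ≤ 1 := by
  intro z G hG
  have hfirm : IsFirmlyNonexpansive prox := IsProxMap.isFirmlyNonexpansive hconv hc hprox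
  obtain ⟨hsymm, hG⟩ : (G : _ →ₗ[ℝ] _).IsSymmetric ∧ IsFirmlyNonexpansive G := by
    refine clarkeJacobian_subset
      (ContinuousLinearMap.isClosed_setOf_isSymmetric.inter
        ContinuousLinearMap.isClosed_setOf_isFirmlyNonexpansive)
      (ContinuousLinearMap.convex_setOf_isSymmetric.inter
        ContinuousLinearMap.convex_setOf_isFirmlyNonexpansive)
      (fun x A hA => ⟨IsProxMap.isSymmetric_of_hasFDerivAt hconv hc hprox hA,
        hfirm.hasFDerivAt hA⟩) hG
  exact ⟨hsymm,
    fun v => (sq_nonneg _).trans (ContinuousLinearMap.isFirmlyNonexpansive_iff.1 hG v),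
    ContinuousLinearMap.opNorm_le_one_of_isFirmlyNonexpansive hG⟩

theorem clarke_jacobian_prox (m : ℕ)
    (φ : EuclideanSpace ℝ (Fin m) → ℝ)
    (hconv : ConvexOn ℝ Set.univ φ) (hlsc : LowerSemicontinuous φ)
    (c : ℝ) (hc : 0 < c)
    (prox : EuclideanSpace ℝ (Fin m) → EuclideanSpace ℝ (Fin m))
    -- `prox w = prox_{φ/c}(w)` : the unique minimizer of `u ↦ φ(u) + (c/2)‖u − w‖²`
    (hprox : ∀ w u, φ (prox w) + c / 2 * ‖prox w - w‖ ^ 2 ≤ φ u + c / 2 * ‖u - w‖ ^ 2) :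
    ∀ (z : EuclideanSpace ℝ (Fin m)) (G : EuclideanSpace ℝ (Fin m) →L[ℝ] EuclideanSpace ℝ (Fin m)),
      G ∈ clarkeJacobian prox z →
        (∀ v w, (inner ℝ (G v) w : ℝ) = (inner ℝ v (G w) : ℝ)) ∧
        (∀ v, 0 ≤ (inner ℝ (G v) v : ℝ)) ∧
        ‖G‖ ≤ 1 :=
  clarke_jacobian_prox_general m φ hconv c hc prox hprox
end

section
/- Let A ∈ ℝ^{n×n} be symmetric positive definite, G ∈ ℝ^{m×m} symmetric positive semidefinite with ‖G‖ ≤ 1, E ∈ ℝ^{m×n} surjective, and c > 0. Then the block matrix [[A + cE^T(I−G)E, ((I−G)E)^T], [(I−G)E, −c^{-1}G]] is nonsingular. -/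
/-!
If `(u, v)` lies in the kernel, pairing the first block row with `u` and substituting the second
row gives `uᵀAu + c (Eu)ᵀ(I - G)(Eu) + c⁻¹ vᵀGv = 0`. Since `‖G‖ ≤ 1` makes `I - G` positive
semidefinite, all three terms vanish, so `u = 0`. Then `Gv = 0` and `Eᵀ(I - G)v = Eᵀv = 0`, and
surjectivity of `E` forces `v = 0`.
-/

open Matrix
open scoped ComplexOrder

theorem LinearMap.IsSymmetric.isPositive_one_sub {𝕜 E : Type*} [RCLike 𝕜]
    [NormedAddCommGroup E] [InnerProductSpace 𝕜 E] {T : E →ₗ[𝕜] E} (hT : T.IsSymmetric)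
    (hT₁ : ∀ x, ‖T x‖ ≤ ‖x‖) : (1 - T).IsPositive := by
  refine ⟨LinearMap.IsSymmetric.id.sub hT, fun x => ?_⟩
  have : RCLike.re (inner 𝕜 (T x) x) ≤ RCLike.re (inner 𝕜 x x) := calc
    RCLike.re (inner 𝕜 (T x) x) ≤ ‖T x‖ * ‖x‖ := re_inner_le_norm _ _
    _ ≤ ‖x‖ * ‖x‖ := by gcongr; exact hT₁ x
    _ = RCLike.re (inner 𝕜 x x) := by rw [inner_self_eq_norm_mul_norm]
  simpa [inner_sub_left] using this

theorem Matrix.IsHermitian.posSemidef_one_sub {𝕜 ι : Type*} [RCLike 𝕜] [Fintype ι]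
    [DecidableEq ι] {G : Matrix ι ι 𝕜} (hG : G.IsHermitian)
    (hG₁ : ∀ v : EuclideanSpace 𝕜 ι, ‖G.toEuclideanLin v‖ ≤ ‖v‖) : (1 - G).PosSemidef := by
  rw [← isPositive_toEuclideanLin_iff, map_sub]
  convert (isSymmetric_toEuclideanLin_iff.mpr hG).isPositive_one_sub hG₁
  ext
  simp

theorem Matrix.eq_zero_of_transpose_mulVec_eq_zero {R ι κ : Type*} [CommRing R] [Fintype ι]
    [Fintype κ] {E : Matrix κ ι R} (hE : Function.Surjective E.mulVec) {v : κ → R}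
    (hv : Eᵀ *ᵥ v = 0) : v = 0 :=
  dotProduct_eq_zero v fun y => by
    obtain ⟨w, rfl⟩ := hE y
    rw [dotProduct_mulVec, ← mulVec_transpose, hv, zero_dotProduct]

theorem newton_kernel_fst_eq_zero {ι κ : Type*} [Fintype ι] [Fintype κ]
    {A : Matrix ι ι ℝ} {G M : Matrix κ κ ℝ} {E : Matrix κ ι ℝ} {c : ℝ} {u : ι → ℝ} {v : κ → ℝ}
    (hA : A.PosDef) (hG : G.PosSemidef) (hM : M.PosSemidef) (hc : 0 < c)
    (h₁ : (A + c • (Eᵀ * M * E)) *ᵥ u + (M * E)ᵀ *ᵥ v = 0)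
    (h₂ : (M * E) *ᵥ u = c⁻¹ • G *ᵥ v) : u = 0 := by
  have hEME : u ⬝ᵥ (Eᵀ * M * E) *ᵥ u = E *ᵥ u ⬝ᵥ M *ᵥ E *ᵥ u := by
    rw [Matrix.mul_assoc, ← mulVec_mulVec, dotProduct_mulVec, ← mulVec_transpose,
      transpose_transpose, mulVec_mulVec]
  have hMEv : u ⬝ᵥ (M * E)ᵀ *ᵥ v = c⁻¹ * (v ⬝ᵥ G *ᵥ v) := by
    rw [dotProduct_mulVec, ← mulVec_transpose, transpose_transpose, h₂, smul_dotProduct,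
      dotProduct_comm, smul_eq_mul]
  have energy : u ⬝ᵥ A *ᵥ u + c * (E *ᵥ u ⬝ᵥ M *ᵥ E *ᵥ u) + c⁻¹ * (v ⬝ᵥ G *ᵥ v) = 0 := by
    simpa only [add_mulVec, smul_mulVec, dotProduct_add, dotProduct_smul, smul_eq_mul, hEME,
      hMEv, dotProduct_zero] using congrArg (u ⬝ᵥ ·) h₁
  by_contra hu
  have hAu := hA.dotProduct_mulVec_pos hu
  have hMEu := hM.dotProduct_mulVec_nonneg (E *ᵥ u)
  have hGv := hG.dotProduct_mulVec_nonneg v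
  simp only [star_trivial] at hAu hMEu hGv
  nlinarith [mul_nonneg hc.le hMEu, mul_nonneg (inv_nonneg.mpr hc.le) hGv]

theorem newton_matrix_nonsingular (n m : ℕ)
    (A : Matrix (Fin n) (Fin n) ℝ) (hA : A.PosDef)
    (G : Matrix (Fin m) (Fin m) ℝ) (hG : G.PosSemidef)
    (hGnorm : ∀ v : EuclideanSpace ℝ (Fin m), ‖Matrix.toEuclideanLin G v‖ ≤ ‖v‖)
    (E : Matrix (Fin m) (Fin n) ℝ) (hE : Function.Surjective E.mulVec)
    (c : ℝ) (hc : 0 < c) :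
    (Matrix.fromBlocks
        (A + c • (Eᵀ * (1 - G) * E)) (((1 - G) * E)ᵀ)
        ((1 - G) * E) (-(c⁻¹ • G))).det ≠ 0 := by
  have hM : (1 - G).PosSemidef := hG.isHermitian.posSemidef_one_sub hGnorm
  rw [Ne, ← exists_mulVec_eq_zero_iff]
  rintro ⟨x, hx, hx0⟩
  obtain ⟨u, v, rfl⟩ : ∃ u v, x = Sum.elim u v := ⟨_, _, (Sum.elim_comp_inl_inr x).symm⟩
  rw [fromBlocks_mulVec, Sum.elim_comp_inl, Sum.elim_comp_inr, ← Sum.elim_zero_zero,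
    Sum.elim_eq_iff] at hx0
  obtain ⟨h₁, h₂⟩ := hx0
  rw [neg_mulVec, smul_mulVec, add_neg_eq_zero] at h₂
  obtain rfl := newton_kernel_fst_eq_zero hA hG hM hc h₁ h₂
  have hGv : G *ᵥ v = 0 := by simpa [hc.ne'] using h₂.symm
  have hEv : Eᵀ *ᵥ v = 0 := by
    simpa [transpose_mul, ← mulVec_mulVec, ← conjTranspose_eq_transpose_of_trivial,
      hM.isHermitian.eq, sub_mulVec, hGv] using h₁
  exact hx (by simp [eq_zero_of_transpose_mulVec_eq_zero hE hEv])
end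

section
/- If A is symmetric positive definite, C is symmetric positive semidefinite, and ker(C) ∩ ker(B^T) = {0}, then the saddle point matrix [[A, B^T], [B, −C]] is nonsingular. -/
/-! A kernel vector `(x, y)` of the saddle point matrix satisfies `xᵀAx + yᵀCy = 0`. Both terms are
nonnegative, so `x = 0` by definiteness of `A` and `Cy = 0` by semidefiniteness of `C`; the first block
row then gives `Bᵀy = 0`, hence `y = 0`. -/

open Matrix

variable {m n : Type*} [Fintype m] [Fintype n]

theorem Matrix.dotProduct_mulVec_add_dotProduct_mulVec_eq_zero_of_saddle {R : Type*} [CommRing R]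
    {A : Matrix n n R} {B : Matrix m n R} {C : Matrix m m R} {x : n → R} {y : m → R}
    (h₁ : A *ᵥ x + Bᵀ *ᵥ y = 0) (h₂ : B *ᵥ x + (-C) *ᵥ y = 0) :
    x ⬝ᵥ A *ᵥ x + y ⬝ᵥ C *ᵥ y = 0 := by
  have hBx : B *ᵥ x = C *ᵥ y := by rwa [neg_mulVec, add_neg_eq_zero] at h₂
  have hcross : x ⬝ᵥ Bᵀ *ᵥ y = y ⬝ᵥ C *ᵥ y := by
    rw [dotProduct_mulVec, vecMul_transpose, hBx, dotProduct_comm]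
  rw [← hcross, ← dotProduct_add, h₁, dotProduct_zero]

theorem Matrix.eq_zero_of_fromBlocks_saddle_mulVec_eq_zero
    {A : Matrix n n ℝ} (hA : A.PosDef) {C : Matrix m m ℝ} (hC : C.PosSemidef) {B : Matrix m n ℝ}
    (hker : ∀ y, C *ᵥ y = 0 → Bᵀ *ᵥ y = 0 → y = 0) {x : n → ℝ} {y : m → ℝ}
    (h : fromBlocks A Bᵀ B (-C) *ᵥ Sum.elim x y = 0) : x = 0 ∧ y = 0 := by
  rw [fromBlocks_mulVec, Sum.elim_comp_inl, Sum.elim_comp_inr, ← Sum.elim_zero_zero,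
    Sum.elim_eq_iff] at h
  obtain ⟨h₁, h₂⟩ := h
  have henergy := dotProduct_mulVec_add_dotProduct_mulVec_eq_zero_of_saddle h₁ h₂
  have hCy_nonneg : 0 ≤ y ⬝ᵥ C *ᵥ y := by simpa using hC.dotProduct_mulVec_nonneg y
  have hx : x = 0 := by
    by_contra hx
    have := hA.dotProduct_mulVec_pos hx
    simp only [star_trivial] at this
    linarith
  have hCy : C *ᵥ y = 0 := by
    rw [← hC.dotProduct_mulVec_zero_iff, star_trivial]
    simpa [hx] using henergy
  have hBy : Bᵀ *ᵥ y = 0 := by simpa [hx] using h₁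
  exact ⟨hx, hker y hCy hBy⟩

theorem saddle_point_matrix_nonsingular (n m : ℕ)
    (A : Matrix (Fin n) (Fin n) ℝ) (hA : A.PosDef)
    (C : Matrix (Fin m) (Fin m) ℝ) (hC : C.PosSemidef)
    (B : Matrix (Fin m) (Fin n) ℝ)
    (hker : ∀ x : Fin m → ℝ, C.mulVec x = 0 → Bᵀ.mulVec x = 0 → x = 0) :
    (Matrix.fromBlocks A Bᵀ B (-C)).det ≠ 0 := by
  intro hdet
  obtain ⟨v, hv, hMv⟩ := exists_mulVec_eq_zero_iff.mpr hdet
  rw [← Sum.elim_comp_inl_inr v] at hv hMv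
  obtain ⟨hx, hy⟩ := eq_zero_of_fromBlocks_saddle_mulVec_eq_zero hA hC hker hMv
  exact hv (by rw [hx, hy, Sum.elim_zero_zero])
end
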